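/- Let N ≥ 2, s ∈ (0,1), and t ∈ [-1,1). Then the map β ↦ B_{s,β}(t) := ∫_0^1 (τ^{-β} - 1)(τ^{N-1} - τ^{β+2s-1}) / (1 + τ² - 2τt)^{N/2+s} dτ is continuous and strictly increasing on the interval (N - 2s, N). -/

import Mathlib

/-!
Write `B(β) = ∫₀¹ g(β, τ) dτ`. For fixed `τ ∈ (0,1)` the integrand is, up to the positive factor
`(1 + τ² - 2τt)^{-(N/2+s)}`, the product of `τ^{-β} - 1` and `τ^{N-1} - τ^{β+2s-1}`; on
`β ≥ N - 2s ≥ 0` both are nonnegative and nondecreasing in `β`, the second strictly. Hence the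
integrand is strictly increasing in `β`, and so is its integral. On a compact subinterval
`[a', b']` of the parameter range it is squeezed between `g(a', ·)` and `g(b', ·)`, which are
integrable because `g(β, τ) ≤ C τ^{N-1-β}` with `N - 1 - β > -1`; dominated convergence then
gives continuity.
-/

open MeasureTheory Set Filter Topology

section ParametricIntegral

variable {α : Type*} [MeasurableSpace α] {μ : Measure α} {f : ℝ → α → ℝ}

theorem strictMonoOn_integral_of_ae_strictMonoOn [NeZero μ] {S : Set ℝ}
    (hf : ∀ β ∈ S, Integrable (f β) μ) (hmono : ∀ᵐ x ∂μ, StrictMonoOn (f · x) S) :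
    StrictMonoOn (fun β => ∫ x, f β x ∂μ) S := by
  intro β₁ h₁ β₂ h₂ hlt
  have hsupp : ∀ᵐ x ∂μ, x ∈ Function.support (fun x => f β₂ x - f β₁ x) :=
    hmono.mono fun x hx => sub_ne_zero.2 (hx h₁ h₂ hlt).ne'
  have hpos : 0 < ∫ x, f β₂ x - f β₁ x ∂μ := by
    rw [integral_pos_iff_support_of_nonneg_ae
      (hmono.mono fun x hx => sub_nonneg.2 (hx.monotoneOn h₁ h₂ hlt.le))
      ((hf β₂ h₂).sub (hf β₁ h₁)), measure_congr (ae_eq_univ (s := Function.support _).2 hsupp)]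
    exact Measure.measure_univ_pos.2 (NeZero.ne μ)
  rw [integral_sub (hf β₂ h₂) (hf β₁ h₁)] at hpos
  exact sub_pos.1 hpos

/-- A monotone family is dominated near `β₀` by `|f a'| + |f b'|` for any `a' < β₀ < b'`. -/
theorem continuousOn_integral_of_ae_monotoneOn {a b : ℝ}
    (hf : ∀ β ∈ Ioo a b, Integrable (f β) μ) (hmono : ∀ᵐ x ∂μ, MonotoneOn (f · x) (Ioo a b))
    (hcont : ∀ᵐ x ∂μ, ContinuousOn (f · x) (Ioo a b)) :
    ContinuousOn (fun β => ∫ x, f β x ∂μ) (Ioo a b) := by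
  intro β₀ hβ₀
  obtain ⟨a', ha', ha'β₀⟩ := exists_between hβ₀.1
  obtain ⟨b', hβ₀b', hb'⟩ := exists_between hβ₀.2
  have ha'_mem : a' ∈ Ioo a b := ⟨ha', ha'β₀.trans hβ₀.2⟩
  have hb'_mem : b' ∈ Ioo a b := ⟨hβ₀.1.trans hβ₀b', hb'⟩
  refine (continuousAt_of_dominated (bound := fun x => ‖f a' x‖ + ‖f b' x‖) ?_ ?_
    ((hf a' ha'_mem).norm.add (hf b' hb'_mem).norm) ?_).continuousWithinAt
  · filter_upwards [isOpen_Ioo.mem_nhds hβ₀] with β hβ using (hf β hβ).aestronglyMeasurable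
  · filter_upwards [Ioo_mem_nhds ha'β₀ hβ₀b'] with β hβ
    have hβ_mem : β ∈ Ioo a b := ⟨ha'.trans hβ.1, hβ.2.trans hb'⟩
    filter_upwards [hmono] with x hx
    have hlo := hx ha'_mem hβ_mem hβ.1.le
    have hhi := hx hβ_mem hb'_mem hβ.2.le
    rw [Real.norm_eq_abs, Real.norm_eq_abs, Real.norm_eq_abs, abs_le]
    constructor <;> linarith [neg_abs_le (f a' x), le_abs_self (f b' x), abs_nonneg (f a' x),
      abs_nonneg (f b' x)]
  · filter_upwards [hcont] with x hx using hx.continuousAt (isOpen_Ioo.mem_nhds hβ₀)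

end ParametricIntegral

theorem min_one_sub_le_one_add_sq_sub {t τ : ℝ} (ht : t ≤ 1) (hτ : 0 ≤ τ) :
    min (1 - t) 1 ≤ 1 + τ ^ 2 - 2 * τ * t := by
  rcases le_total t 0 with h | h
  · exact (min_le_right _ _).trans (by nlinarith)
  · -- `1 + τ² - 2τt - (1 - t) = (τ - t)² + t(1 - t)`
    exact (min_le_left _ _).trans (by nlinarith [sq_nonneg (τ - t)])

theorem one_add_sq_sub_pos {t τ : ℝ} (ht : t < 1) (hτ : 0 ≤ τ) :
    0 < 1 + τ ^ 2 - 2 * τ * t :=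
  (lt_min (sub_pos.2 ht) one_pos).trans_le (min_one_sub_le_one_add_sq_sub ht.le hτ)

namespace BIntegrand

noncomputable def integrand (N s t β τ : ℝ) : ℝ :=
  (τ ^ (-β) - 1) * (τ ^ (N - 1) - τ ^ (β + 2 * s - 1)) /
    (1 + τ ^ 2 - 2 * τ * t) ^ (N / 2 + s)

variable {N s t β τ : ℝ}

theorem measurable_integrand : Measurable (integrand N s t β) := by
  unfold integrand
  fun_prop

theorem continuous_integrand_param (hτ : τ ≠ 0) : Continuous (integrand N s t · τ) := by
  unfold integrand
  fun_prop (disch := exact hτ)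

theorem integrand_nonneg (ht : t < 1) (hτ : τ ∈ Ioo (0 : ℝ) 1) (hβ : N - 2 * s ≤ β)
    (hβ₀ : 0 ≤ β) : 0 ≤ integrand N s t β τ := by
  unfold integrand
  refine div_nonneg (mul_nonneg ?_ ?_) (Real.rpow_nonneg (one_add_sq_sub_pos ht hτ.1.le).le _)
  · exact sub_nonneg.2 (Real.one_le_rpow_of_pos_of_le_one_of_nonpos hτ.1 hτ.2.le (by linarith))
  · exact sub_nonneg.2 (Real.rpow_le_rpow_of_exponent_ge hτ.1 hτ.2.le (by linarith))

theorem integrand_le (ht : t < 1) (hτ : τ ∈ Ioo (0 : ℝ) 1) (hβ : N - 2 * s ≤ β)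
    (hp : 0 ≤ N / 2 + s) :
    integrand N s t β τ ≤ τ ^ (N - 1 - β) / min (1 - t) 1 ^ (N / 2 + s) := by
  have hc : 0 < min (1 - t) 1 := lt_min (sub_pos.2 ht) one_pos
  have hnum : (τ ^ (-β) - 1) * (τ ^ (N - 1) - τ ^ (β + 2 * s - 1)) ≤ τ ^ (N - 1 - β) := by
    calc (τ ^ (-β) - 1) * (τ ^ (N - 1) - τ ^ (β + 2 * s - 1))
        ≤ τ ^ (-β) * τ ^ (N - 1) :=
          mul_le_mul (by linarith)
            (by linarith [Real.rpow_nonneg hτ.1.le (β + 2 * s - 1)])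
            (sub_nonneg.2 (Real.rpow_le_rpow_of_exponent_ge hτ.1 hτ.2.le (by linarith)))
            (Real.rpow_nonneg hτ.1.le _)
      _ = τ ^ (N - 1 - β) := by rw [← Real.rpow_add hτ.1]; ring_nf
  exact div_le_div₀ (Real.rpow_nonneg hτ.1.le _) hnum (Real.rpow_pos_of_pos hc _)
    (Real.rpow_le_rpow hc.le (min_one_sub_le_one_add_sq_sub ht.le hτ.1.le) hp)

theorem integrableOn_integrand (ht : t < 1) (hβ : N - 2 * s ≤ β) (hβ₀ : 0 ≤ β) (hβN : β < N)
    (hp : 0 ≤ N / 2 + s) : IntegrableOn (integrand N s t β) (Ioo 0 1) := by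
  have hbound : IntegrableOn (fun τ : ℝ => τ ^ (N - 1 - β) / min (1 - t) 1 ^ (N / 2 + s))
      (Ioo 0 1) :=
    (intervalIntegral.integrableOn_Ioo_rpow_iff zero_lt_one).2 (by linarith) |>.div_const _
  refine hbound.mono' measurable_integrand.aestronglyMeasurable ?_
  filter_upwards [ae_restrict_mem measurableSet_Ioo] with τ hτ
  rw [Real.norm_eq_abs, abs_of_nonneg (integrand_nonneg ht hτ hβ hβ₀)]
  exact integrand_le ht hτ hβ hp

theorem strictMonoOn_integrand (ht : t < 1) (hτ : τ ∈ Ioo (0 : ℝ) 1) (hNs : 0 ≤ N - 2 * s) :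
    StrictMonoOn (integrand N s t · τ) (Ici (N - 2 * s)) := by
  intro β₁ h₁ β₂ h₂ hlt
  have h₁ : N - 2 * s ≤ β₁ := h₁
  refine div_lt_div_of_pos_right ?_ (Real.rpow_pos_of_pos (one_add_sq_sub_pos ht hτ.1.le) _)
  have hpow₁ : τ ^ (-β₁) ≤ τ ^ (-β₂) :=
    Real.rpow_le_rpow_of_exponent_ge hτ.1 hτ.2.le (by linarith)
  have hpow₂ : τ ^ (β₂ + 2 * s - 1) < τ ^ (β₁ + 2 * s - 1) :=
    Real.rpow_lt_rpow_of_exponent_gt hτ.1 hτ.2 (by linarith)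
  have hfactor₂ : 0 ≤ τ ^ (N - 1) - τ ^ (β₁ + 2 * s - 1) :=
    sub_nonneg.2 (Real.rpow_le_rpow_of_exponent_ge hτ.1 hτ.2.le (by linarith))
  have hfactor₁ : 0 < τ ^ (-β₂) - 1 :=
    sub_pos.2 (Real.one_lt_rpow_of_pos_of_lt_one_of_neg hτ.1 hτ.2 (by linarith))
  exact mul_lt_mul' (by linarith) (by linarith) hfactor₂ hfactor₁

end BIntegrand

open BIntegrand in
theorem stmt2 (N s t : ℝ) (hN : 2 ≤ N) (hs : s ∈ Set.Ioo (0:ℝ) 1)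
    (ht : t ∈ Set.Ico (-1:ℝ) 1) :
    ContinuousOn (fun β : ℝ => ∫ τ in Set.Ioo (0:ℝ) 1,
        (τ ^ (-β) - 1) * (τ ^ (N - 1) - τ ^ (β + 2 * s - 1)) /
          (1 + τ ^ 2 - 2 * τ * t) ^ (N / 2 + s)) (Set.Ioo (N - 2 * s) N) ∧
    StrictMonoOn (fun β : ℝ => ∫ τ in Set.Ioo (0:ℝ) 1,
        (τ ^ (-β) - 1) * (τ ^ (N - 1) - τ ^ (β + 2 * s - 1)) /
          (1 + τ ^ 2 - 2 * τ * t) ^ (N / 2 + s)) (Set.Ioo (N - 2 * s) N) := by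
  have hNs : 0 ≤ N - 2 * s := by linarith [hs.2]
  have hp : 0 ≤ N / 2 + s := by linarith [hs.1]
  have : NeZero (volume.restrict (Ioo (0 : ℝ) 1)) := ⟨by simp⟩
  have hint : ∀ β ∈ Ioo (N - 2 * s) N, IntegrableOn (integrand N s t β) (Ioo 0 1) :=
    fun β hβ => integrableOn_integrand ht.2 hβ.1.le (hNs.trans hβ.1.le) hβ.2 hp
  have hmono : ∀ᵐ τ ∂volume.restrict (Ioo (0 : ℝ) 1),
      StrictMonoOn (integrand N s t · τ) (Ioo (N - 2 * s) N) := by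
    filter_upwards [ae_restrict_mem measurableSet_Ioo] with τ hτ
    exact (strictMonoOn_integrand ht.2 hτ hNs).mono fun _ hβ => hβ.1.le
  have hcont : ∀ᵐ τ ∂volume.restrict (Ioo (0 : ℝ) 1),
      ContinuousOn (integrand N s t · τ) (Ioo (N - 2 * s) N) := by
    filter_upwards [ae_restrict_mem measurableSet_Ioo] with τ hτ
    exact (continuous_integrand_param hτ.1.ne').continuousOn
  exact ⟨continuousOn_integral_of_ae_monotoneOn hint (hmono.mono fun _ h => h.monotoneOn) hcont,
    strictMonoOn_integral_of_ae_strictMonoOn hint hmono⟩
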